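/- Let M ∈ ℝ^{m×n} have unit-norm columns and satisfy the RIP of order 2k with constant δ ∈ (0,1). Let x ∈ ℝⁿ have support L with |L| = k, let y₀ = Mx ≠ 0, let w ∈ ℝᵐ, and let y = y₀ + w. Let T ⊆ {1,…,n} with |T| = k and T ∩ L = ∅. Then there exists an index j ∈ T such that |⟨R_{T∖j} m_(j), y⟩| / ‖R_{T∖j} m_(j)‖ ≤ (δ‖y₀‖ + ‖P_T w‖) / √(k(1−δ)). -/

import Mathlib

/-!
Let `z` be the least-squares coefficients of `y` on the columns of `M_T` and pick `j ∈ T` minimising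
`|z_j|`. Since `R_T y` is orthogonal to the columns in `T` and `u = R_{T∖j} m_j` to those in `T∖j`,
`⟨u, y⟩ = z_j ‖u‖²`, and `‖u‖ ≤ ‖m_j‖ = 1`, so the ratio is at most `|z_j|`. By minimality and the
lower RIP bound, `k (1 - δ) z_j² ≤ (1 - δ) ‖z‖² ≤ ‖M_T z‖² = ‖P_T y‖² ≤ (‖P_T y₀‖ + ‖P_T w‖)²`.
Finally `P_T y₀ = M c` with `c` supported on `T`, disjoint from the support of `x`, so `c + δ x` and
`c - δ x` are `2k`-sparse of equal norm; comparing their images under the RIP gives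
`‖P_T y₀‖ ≤ δ ‖y₀‖`.
-/

open Matrix

noncomputable section

/-- `M` satisfies the RIP of order `s` with constant `δ` if
`(1−δ)‖v‖² ≤ ‖Mv‖² ≤ (1+δ)‖v‖²` for every `v` with at most `s` nonzero entries. -/
def RIP {m n : ℕ} (M : Matrix (Fin m) (Fin n) ℝ) (s : ℕ) (δ : ℝ) : Prop :=
  ∀ v : Fin n → ℝ, (∃ S : Finset (Fin n), S.card ≤ s ∧ ∀ i ∉ S, v i = 0) →
    (1 - δ) * (v ⬝ᵥ v) ≤ (M *ᵥ v) ⬝ᵥ (M *ᵥ v) ∧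
      (M *ᵥ v) ⬝ᵥ (M *ᵥ v) ≤ (1 + δ) * (v ⬝ᵥ v)

/-- `M_T`: the submatrix of `M` of the columns indexed by `T`. -/
def colsOf {m n : ℕ} (M : Matrix (Fin m) (Fin n) ℝ) (T : Finset (Fin n)) :
    Matrix (Fin m) {i // i ∈ T} ℝ :=
  M.submatrix id fun j => (j : Fin n)

/-- `P_T = M_T (M_TᵀM_T)⁻¹ M_Tᵀ`. -/
def projT {m n : ℕ} (M : Matrix (Fin m) (Fin n) ℝ) (T : Finset (Fin n)) :
    Matrix (Fin m) (Fin m) ℝ :=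
  colsOf M T * ((colsOf M T)ᵀ * colsOf M T)⁻¹ * (colsOf M T)ᵀ

/-- `R_T = I − P_T`. -/
def residT {m n : ℕ} (M : Matrix (Fin m) (Fin n) ℝ) (T : Finset (Fin n)) :
    Matrix (Fin m) (Fin m) ℝ :=
  1 - projT M T

/-- The Euclidean norm of a vector. -/
def nrm {ι : Type} [Fintype ι] (v : ι → ℝ) : ℝ := Real.sqrt (v ⬝ᵥ v)

section Norm

variable {ι : Type} [Fintype ι]

theorem nrm_eq_norm (v : ι → ℝ) : nrm v = ‖WithLp.toLp 2 v‖ := by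
  rw [nrm, norm_eq_sqrt_real_inner, EuclideanSpace.inner_toLp_toLp, star_trivial]

theorem nrm_nonneg (v : ι → ℝ) : 0 ≤ nrm v := Real.sqrt_nonneg _

theorem sq_nrm (v : ι → ℝ) : nrm v ^ 2 = v ⬝ᵥ v := by
  rw [nrm_eq_norm, ← real_inner_self_eq_norm_sq, EuclideanSpace.inner_toLp_toLp, star_trivial]

theorem nrm_add_le (u v : ι → ℝ) : nrm (u + v) ≤ nrm u + nrm v := by
  simpa only [nrm_eq_norm, WithLp.toLp_add] using norm_add_le (WithLp.toLp 2 u) (WithLp.toLp 2 v)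

theorem dotProduct_le_nrm_mul_nrm (u v : ι → ℝ) : u ⬝ᵥ v ≤ nrm u * nrm v := by
  simpa only [nrm_eq_norm, EuclideanSpace.inner_toLp_toLp, star_trivial, dotProduct_comm v u]
    using real_inner_le_norm (WithLp.toLp 2 u) (WithLp.toLp 2 v)

theorem abs_mul_dotProduct_self_div_nrm (c : ℝ) (u : ι → ℝ) :
    |c * (u ⬝ᵥ u)| / nrm u = |c| * nrm u := by
  rw [← sq_nrm, abs_mul, abs_sq]
  rcases eq_or_ne (nrm u) 0 with hu | hu
  · simp [hu]
  · field_simp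

theorem card_mul_sq_le_dotProduct_self {z : ι → ℝ} {j : ι} (hj : ∀ i, |z j| ≤ |z i|) :
    Fintype.card ι * z j ^ 2 ≤ z ⬝ᵥ z := by
  rw [← nsmul_eq_mul]
  refine Finset.card_nsmul_le_sum _ _ _ fun i _ => ?_
  rw [← sq, ← sq_abs, ← sq_abs (z i)]
  exact pow_le_pow_left₀ (abs_nonneg _) (hj i) 2

end Norm

section SymmetricIdempotent

variable {ι : Type} [Fintype ι] {A : Matrix ι ι ℝ}

theorem Matrix.IsSymm.mulVec_dotProduct (hA : A.IsSymm) (u v : ι → ℝ) :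
    (A *ᵥ u) ⬝ᵥ v = u ⬝ᵥ (A *ᵥ v) := by
  rw [dotProduct_mulVec, ← mulVec_transpose, hA.eq]

theorem Matrix.IsSymm.mulVec_dotProduct_mulVec_self (hA : A.IsSymm) (hAA : A * A = A)
    (v : ι → ℝ) : (A *ᵥ v) ⬝ᵥ (A *ᵥ v) = v ⬝ᵥ (A *ᵥ v) := by
  rw [hA.mulVec_dotProduct, mulVec_mulVec, hAA]

theorem Matrix.IsSymm.nrm_mulVec_le (hA : A.IsSymm) (hAA : A * A = A) (v : ι → ℝ) :
    nrm (A *ᵥ v) ≤ nrm v := by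
  have h : nrm (A *ᵥ v) ^ 2 ≤ nrm v * nrm (A *ᵥ v) := by
    rw [sq_nrm, hA.mulVec_dotProduct_mulVec_self hAA]
    exact dotProduct_le_nrm_mul_nrm _ _
  nlinarith [nrm_nonneg (A *ᵥ v), nrm_nonneg v]

end SymmetricIdempotent

section ExtendByZero

variable {ι : Type} [DecidableEq ι] {S : Finset ι}

def extendByZero (S : Finset ι) (z : S → ℝ) : ι → ℝ :=
  fun i => if h : i ∈ S then z ⟨i, h⟩ else 0

theorem extendByZero_of_notMem (z : S → ℝ) {i : ι} (hi : i ∉ S) : extendByZero S z i = 0 :=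
  dif_neg hi

variable [Fintype ι]

theorem sum_extendByZero (f : ι → ℝ → ℝ) (hf : ∀ i, f i 0 = 0) (z : S → ℝ) :
    ∑ i, f i (extendByZero S z i) = ∑ i : S, f i (z i) := by
  rw [← Finset.sum_subset (Finset.subset_univ S)
    fun i _ hi => by rw [extendByZero_of_notMem z hi, hf], ← Finset.sum_coe_sort S]
  exact Finset.sum_congr rfl fun i _ => by rw [extendByZero, dif_pos i.2]

theorem extendByZero_dotProduct_self (z : S → ℝ) :
    extendByZero S z ⬝ᵥ extendByZero S z = z ⬝ᵥ z :=
  sum_extendByZero (fun _ t => t * t) (fun _ => mul_zero 0) z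

end ExtendByZero

variable {m n s : ℕ} {M : Matrix (Fin m) (Fin n) ℝ} {S : Finset (Fin n)} {δ : ℝ}

theorem mulVec_extendByZero (M : Matrix (Fin m) (Fin n) ℝ) (z : S → ℝ) :
    M *ᵥ extendByZero S z = colsOf M S *ᵥ z :=
  funext fun r => sum_extendByZero (fun i t => M r i * t) (fun _ => mul_zero _) z

theorem transpose_colsOf_mulVec_apply (v : Fin m → ℝ) (i : S) :
    ((colsOf M S)ᵀ *ᵥ v) i = Mᵀ i ⬝ᵥ v :=
  rfl

namespace RIP

theorem one_sub_mul_dotProduct_le_colsOf_mulVec (h : RIP M s δ) (hS : S.card ≤ s) (z : S → ℝ) :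
    (1 - δ) * (z ⬝ᵥ z) ≤ (colsOf M S *ᵥ z) ⬝ᵥ (colsOf M S *ᵥ z) := by
  have := (h (extendByZero S z) ⟨S, hS, fun _ => extendByZero_of_notMem z⟩).1
  rwa [extendByZero_dotProduct_self, mulVec_extendByZero] at this

theorem posDef_gram (h : RIP M s δ) (hδ : δ < 1) (hS : S.card ≤ s) :
    ((colsOf M S)ᵀ * colsOf M S).PosDef := by
  refine posDef_iff_dotProduct_mulVec.mpr
    ⟨by simpa using isHermitian_conjTranspose_mul_self (colsOf M S), fun z hz => ?_⟩
  rw [star_trivial, ← mulVec_mulVec, dotProduct_transpose_mulVec, dotProduct_comm]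
  have hz : 0 < z ⬝ᵥ z := lt_of_le_of_ne (by simpa using dotProduct_star_self_nonneg z)
    (Ne.symm (dotProduct_self_eq_zero.not.mpr hz))
  exact (mul_pos (by linarith) hz).trans_le (h.one_sub_mul_dotProduct_le_colsOf_mulVec hS z)

theorem isUnit_det_gram (h : RIP M s δ) (hδ : δ < 1) (hS : S.card ≤ s) :
    IsUnit ((colsOf M S)ᵀ * colsOf M S).det :=
  (h.posDef_gram hδ hS).det_pos.ne'.isUnit

theorem one_sub_mul_le_one_add_mul (h : RIP M s δ) (hδ0 : 0 ≤ δ) (hδ1 : δ ≤ 1)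
    (hS : S.card ≤ s) {a b : Fin n → ℝ} (ha : ∀ i ∉ S, a i = 0) (hb : ∀ i ∉ S, b i = 0)
    (hab : a ⬝ᵥ a = b ⬝ᵥ b) :
    (1 - δ) * ((M *ᵥ a) ⬝ᵥ (M *ᵥ a)) ≤ (1 + δ) * ((M *ᵥ b) ⬝ᵥ (M *ᵥ b)) :=
  calc (1 - δ) * ((M *ᵥ a) ⬝ᵥ (M *ᵥ a)) ≤ (1 - δ) * ((1 + δ) * (a ⬝ᵥ a)) :=
        mul_le_mul_of_nonneg_left (h a ⟨S, hS, ha⟩).2 (by linarith)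
    _ = (1 + δ) * ((1 - δ) * (b ⬝ᵥ b)) := by rw [hab]; ring
    _ ≤ (1 + δ) * ((M *ᵥ b) ⬝ᵥ (M *ᵥ b)) :=
        mul_le_mul_of_nonneg_left (h b ⟨S, hS, hb⟩).1 (by linarith)

end RIP

def lstsqCoeff (M : Matrix (Fin m) (Fin n) ℝ) (S : Finset (Fin n)) (y : Fin m → ℝ) : S → ℝ :=
  ((colsOf M S)ᵀ * colsOf M S)⁻¹ *ᵥ ((colsOf M S)ᵀ *ᵥ y)

theorem colsOf_mulVec_lstsqCoeff (y : Fin m → ℝ) :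
    colsOf M S *ᵥ lstsqCoeff M S y = projT M S *ᵥ y := by
  simp only [lstsqCoeff, projT, mulVec_mulVec, Matrix.mul_assoc]

theorem isSymm_projT : (projT M S).IsSymm := by
  rw [IsSymm, projT, transpose_mul, transpose_mul, transpose_transpose, transpose_nonsing_inv,
    transpose_mul, transpose_transpose, Matrix.mul_assoc]

theorem isSymm_residT : (residT M S).IsSymm := by
  rw [IsSymm, residT, transpose_sub, transpose_one, isSymm_projT.eq]

theorem residT_mulVec (y : Fin m → ℝ) : residT M S *ᵥ y = y - projT M S *ᵥ y := by
  rw [residT, sub_mulVec, one_mulVec]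

theorem projT_mulVec_add_residT_mulVec (y : Fin m → ℝ) :
    projT M S *ᵥ y + residT M S *ᵥ y = y := by
  rw [residT_mulVec, add_sub_cancel]

section

variable (hS : IsUnit ((colsOf M S)ᵀ * colsOf M S).det)
include hS

theorem projT_mul_colsOf : projT M S * colsOf M S = colsOf M S := by
  rw [projT, Matrix.mul_assoc, Matrix.mul_assoc, nonsing_inv_mul _ hS, Matrix.mul_one]

theorem transpose_colsOf_mul_projT : (colsOf M S)ᵀ * projT M S = (colsOf M S)ᵀ := by
  simpa only [transpose_mul, isSymm_projT.eq] using congrArg transpose (projT_mul_colsOf hS)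

theorem projT_mul_self : projT M S * projT M S = projT M S := by
  nth_rw 1 [projT]
  rw [Matrix.mul_assoc, transpose_colsOf_mul_projT hS, projT]

theorem residT_mul_self : residT M S * residT M S = residT M S := by
  simp only [residT, sub_mul, mul_sub, Matrix.one_mul, Matrix.mul_one, projT_mul_self hS]
  abel

theorem residT_mulVec_col {i : Fin n} (hi : i ∈ S) : residT M S *ᵥ Mᵀ i = 0 := by
  have hcol : Mᵀ i = colsOf M S *ᵥ Pi.single ⟨i, hi⟩ 1 := by
    rw [mulVec_single_one]
    rfl
  rw [residT_mulVec, hcol, mulVec_mulVec, projT_mul_colsOf hS, sub_self]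

theorem transpose_colsOf_mulVec_residT (y : Fin m → ℝ) :
    (colsOf M S)ᵀ *ᵥ (residT M S *ᵥ y) = 0 := by
  rw [residT, mulVec_mulVec, Matrix.mul_sub, transpose_colsOf_mul_projT hS, Matrix.mul_one,
    sub_self, zero_mulVec]

theorem col_dotProduct_residT {i : Fin n} (hi : i ∈ S) (y : Fin m → ℝ) :
    Mᵀ i ⬝ᵥ (residT M S *ᵥ y) = 0 :=
  congrFun (transpose_colsOf_mulVec_residT hS y) ⟨i, hi⟩

theorem residT_mulVec_residT_of_subset {S' : Finset (Fin n)} (hS' : S' ⊆ S) (y : Fin m → ℝ) :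
    residT M S' *ᵥ (residT M S *ᵥ y) = residT M S *ᵥ y := by
  have h : (colsOf M S')ᵀ *ᵥ (residT M S *ᵥ y) = 0 :=
    funext fun i => col_dotProduct_residT hS (hS' i.2) y
  rw [residT_mulVec (S := S'), projT, ← mulVec_mulVec, h, mulVec_zero, sub_zero]

end

section Erase

variable {j : Fin n} (hSj : IsUnit ((colsOf M (S.erase j))ᵀ * colsOf M (S.erase j)).det)
include hSj

theorem transpose_colsOf_mulVec_residT_erase_col (hj : j ∈ S) :
    (colsOf M S)ᵀ *ᵥ (residT M (S.erase j) *ᵥ Mᵀ j) =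
      Pi.single ⟨j, hj⟩ ((residT M (S.erase j) *ᵥ Mᵀ j) ⬝ᵥ (residT M (S.erase j) *ᵥ Mᵀ j)) := by
  funext i
  rw [transpose_colsOf_mulVec_apply]
  by_cases hij : i = ⟨j, hj⟩
  · subst hij
    rw [Pi.single_eq_same, isSymm_residT.mulVec_dotProduct_mulVec_self (residT_mul_self hSj)]
  · rw [Pi.single_eq_of_ne hij, ← isSymm_residT.mulVec_dotProduct,
      residT_mulVec_col hSj (Finset.mem_erase.mpr ⟨fun h => hij (Subtype.ext h), i.2⟩),
      zero_dotProduct]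

theorem residT_erase_col_dotProduct (hS : IsUnit ((colsOf M S)ᵀ * colsOf M S).det) (hj : j ∈ S)
    (y : Fin m → ℝ) :
    (residT M (S.erase j) *ᵥ Mᵀ j) ⬝ᵥ y =
      lstsqCoeff M S y ⟨j, hj⟩ *
        ((residT M (S.erase j) *ᵥ Mᵀ j) ⬝ᵥ (residT M (S.erase j) *ᵥ Mᵀ j)) := by
  have hres : (residT M (S.erase j) *ᵥ Mᵀ j) ⬝ᵥ (residT M S *ᵥ y) = 0 := by
    rw [isSymm_residT.mulVec_dotProduct,
      residT_mulVec_residT_of_subset hS (Finset.erase_subset j S),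
      col_dotProduct_residT hS hj]
  conv_lhs => rw [← projT_mulVec_add_residT_mulVec (M := M) (S := S) y]
  rw [dotProduct_add, hres, add_zero, ← colsOf_mulVec_lstsqCoeff, ← dotProduct_transpose_mulVec,
    transpose_colsOf_mulVec_residT_erase_col hSj hj, dotProduct_single]

end Erase

theorem RIP.nrm_projT_mulVec_le (h : RIP M s δ) (hδ0 : 0 < δ) (hδ1 : δ < 1) {L : Finset (Fin n)}
    {x : Fin n → ℝ} (hx : ∀ i ∉ L, x i = 0) (hSL : Disjoint S L) (hcard : S.card + L.card ≤ s) :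
    nrm (projT M S *ᵥ (M *ᵥ x)) ≤ δ * nrm (M *ᵥ x) := by
  have hS := h.isUnit_det_gram (S := S) hδ1 (by omega)
  set y := M *ᵥ x
  set p := projT M S *ᵥ y
  set c := extendByZero S (lstsqCoeff M S y)
  have hc : ∀ i ∉ S, c i = 0 := fun _ => extendByZero_of_notMem _
  have hcx : c ⬝ᵥ x = 0 := Finset.sum_eq_zero fun i _ => by
    by_cases hi : i ∈ S
    · rw [hx i (Finset.disjoint_left.mp hSL hi), mul_zero]
    · rw [hc i hi, zero_mul]
  have hsupp (t : ℝ) : ∀ i ∉ S ∪ L, (c + t • x) i = 0 := fun i hi => by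
    rw [Finset.mem_union, not_or] at hi
    simp [hc i hi.1, hx i hi.2]
  have hnorm (t : ℝ) : (c + t • x) ⬝ᵥ (c + t • x) = c ⬝ᵥ c + t ^ 2 * (x ⬝ᵥ x) := by
    simp only [add_dotProduct, dotProduct_add, smul_dotProduct, dotProduct_smul, smul_eq_mul,
      dotProduct_comm x c, hcx]
    ring
  have hpy : p ⬝ᵥ y = p ⬝ᵥ p := by
    rw [isSymm_projT.mulVec_dotProduct_mulVec_self (projT_mul_self hS), dotProduct_comm]
  have himage (t : ℝ) : (M *ᵥ (c + t • x)) ⬝ᵥ (M *ᵥ (c + t • x)) =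
      p ⬝ᵥ p + 2 * t * (p ⬝ᵥ p) + t ^ 2 * (y ⬝ᵥ y) := by
    rw [mulVec_add, mulVec_smul, mulVec_extendByZero, colsOf_mulVec_lstsqCoeff]
    change (p + t • y) ⬝ᵥ (p + t • y) = _
    simp only [add_dotProduct, dotProduct_add, smul_dotProduct, dotProduct_smul, smul_eq_mul,
      dotProduct_comm y p, hpy]
    ring
  have key := h.one_sub_mul_le_one_add_mul hδ0.le hδ1.le
    ((Finset.card_union_le S L).trans hcard) (hsupp δ) (hsupp (-δ)) (by rw [hnorm, hnorm, neg_sq])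
  rw [himage, himage] at key
  -- the two sides of `key` differ by `2δ (δ² ‖y‖² - ‖p‖²)`
  have hp : p ⬝ᵥ p ≤ δ ^ 2 * (y ⬝ᵥ y) := by nlinarith
  calc nrm p ≤ Real.sqrt (δ ^ 2 * (y ⬝ᵥ y)) := Real.sqrt_le_sqrt hp
    _ = δ * nrm y := by rw [Real.sqrt_mul (sq_nonneg δ), Real.sqrt_sq hδ0.le, nrm]

theorem RIP.abs_lstsqCoeff_le (h : RIP M s δ) (hδ1 : δ < 1) (hS : S.card ≤ s) (y : Fin m → ℝ)
    {j : S} (hj : ∀ i, |lstsqCoeff M S y j| ≤ |lstsqCoeff M S y i|) :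
    |lstsqCoeff M S y j| ≤ nrm (projT M S *ᵥ y) / Real.sqrt (S.card * (1 - δ)) := by
  set z := lstsqCoeff M S y
  have hcard : (0 : ℝ) < S.card := by exact_mod_cast (Finset.card_pos (s := S)).mpr ⟨j, j.2⟩
  have hz : (S.card * (1 - δ)) * z j ^ 2 ≤ nrm (projT M S *ᵥ y) ^ 2 := by
    have hmin := card_mul_sq_le_dotProduct_self hj
    have hrip := h.one_sub_mul_dotProduct_le_colsOf_mulVec hS z
    rw [Fintype.card_coe] at hmin
    rw [sq_nrm, ← colsOf_mulVec_lstsqCoeff]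
    nlinarith
  rw [le_div_iff₀ (Real.sqrt_pos.mpr (by nlinarith)), ← Real.sqrt_sq (abs_nonneg (z j)),
    ← Real.sqrt_mul (sq_nonneg _), ← Real.sqrt_sq (nrm_nonneg (projT M S *ᵥ y)), sq_abs]
  exact Real.sqrt_le_sqrt (by linarith)

theorem stmt11 {m n k : ℕ} (M : Matrix (Fin m) (Fin n) ℝ) (δ : ℝ)
    (hδ0 : 0 < δ) (hδ1 : δ < 1)
    (hunit : ∀ j : Fin n, (fun r => M r j) ⬝ᵥ (fun r => M r j) = 1)
    (hRIP : RIP M (2 * k) δ)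
    (x : Fin n → ℝ) (L : Finset (Fin n)) (hsupp : ∀ i, x i ≠ 0 ↔ i ∈ L)
    (hL : L.card = k)
    (y0 : Fin m → ℝ) (hy0 : y0 = M *ᵥ x) (hy0ne : y0 ≠ 0)
    (w : Fin m → ℝ) (y : Fin m → ℝ) (hy : y = y0 + w)
    (T : Finset (Fin n)) (hT : T.card = k) (hdisj : Disjoint T L) :
    ∃ j ∈ T,
      |(residT M (T.erase j) *ᵥ fun r => M r j) ⬝ᵥ y| /
          nrm (residT M (T.erase j) *ᵥ fun r => M r j) ≤
        (δ * nrm y0 + nrm (projT M T *ᵥ w)) / Real.sqrt ((k : ℝ) * (1 - δ)) := by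
  have hx : ∀ i ∉ L, x i = 0 := fun i hi => not_not.mp (mt (hsupp i).mp hi)
  have hk : 0 < k := by
    obtain ⟨i, hi⟩ := Function.ne_iff.mp fun hx0 : x = 0 => hy0ne (by rw [hy0, hx0, mulVec_zero])
    exact hL ▸ Finset.card_pos.mpr ⟨i, (hsupp i).mp hi⟩
  have hT2k : T.card ≤ 2 * k := by omega
  have hdT := hRIP.isUnit_det_gram hδ1 hT2k
  have : Nonempty T := (Finset.card_pos.mp (hT ▸ hk)).to_subtype
  obtain ⟨j, hj⟩ := Finite.exists_min fun i : T => |lstsqCoeff M T y i|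
  refine ⟨j, j.2, ?_⟩
  have hdTj := hRIP.isUnit_det_gram (S := T.erase j) hδ1 (Finset.card_erase_le.trans hT2k)
  have hcol : nrm (Mᵀ j) = 1 := by rw [nrm, show Mᵀ j ⬝ᵥ Mᵀ j = 1 from hunit j, Real.sqrt_one]
  have hPy : nrm (projT M T *ᵥ y) ≤ δ * nrm y0 + nrm (projT M T *ᵥ w) := by
    rw [hy, mulVec_add]
    refine (nrm_add_le _ _).trans (add_le_add_left ?_ _)
    exact hy0 ▸ hRIP.nrm_projT_mulVec_le hδ0 hδ1 hx hdisj (by omega)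
  change |(residT M (T.erase j) *ᵥ Mᵀ j) ⬝ᵥ y| / nrm (residT M (T.erase j) *ᵥ Mᵀ j) ≤ _
  rw [residT_erase_col_dotProduct hdTj hdT j.2, abs_mul_dotProduct_self_div_nrm, ← hT]
  calc |lstsqCoeff M T y j| * nrm (residT M (T.erase j) *ᵥ Mᵀ j)
      ≤ |lstsqCoeff M T y j| * 1 :=
        mul_le_mul_of_nonneg_left (hcol ▸ isSymm_residT.nrm_mulVec_le (residT_mul_self hdTj) _)
          (abs_nonneg _)
    _ ≤ nrm (projT M T *ᵥ y) / Real.sqrt (T.card * (1 - δ)) := by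
        rw [mul_one]; exact hRIP.abs_lstsqCoeff_le hδ1 hT2k y hj
    _ ≤ _ := div_le_div_of_nonneg_right hPy (Real.sqrt_nonneg _)

end
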